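/- arXiv:0706.0699 — 2 statements merged into one kernel-verified Lean document; each statement's English description precedes it below -/
import Mathlib

section
/- Let ε > 0 and let λᵢ, λⱼ, λₖ be real numbers such that 3 + (1−ε)x² + 2xy ≥ 0 for every ordered pair (x,y) of (not necessarily distinct) elements of {λᵢ, λⱼ, λₖ}. If λᵢ ≥ λₖ ≥ λⱼ, then S = 3 + λᵢλⱼ + λⱼλₖ + λₖλᵢ ≥ ε · min{λᵢ², λⱼ²}. -/
/-- The algebraic inequality (2.5): the ε-convexity condition on all ordered
pairs from `{λᵢ, λⱼ, λₖ}` forces `S = 3 + λᵢλⱼ + λⱼλₖ + λₖλᵢ ≥ ε·min{λᵢ², λⱼ²}`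
when `λᵢ ≥ λₖ ≥ λⱼ`. -/
theorem stmt_5 (ε : ℝ) (hε : 0 < ε) (li lj lk : ℝ)
    (h : ∀ x ∈ ({li, lj, lk} : Set ℝ), ∀ y ∈ ({li, lj, lk} : Set ℝ),
      0 ≤ 3 + (1 - ε) * x ^ 2 + 2 * x * y)
    (h1 : lk ≤ li) (h2 : lj ≤ lk) :
    ε * min (li ^ 2) (lj ^ 2) ≤ 3 + li * lj + lj * lk + lk * li := by
  have hij := h li (by simp) lj (by simp)
  have hji := h lj (by simp) li (by simp)
  rcases le_total 0 (li + lj) with hs | hs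
  · have hm : min (li ^ 2) (lj ^ 2) = lj ^ 2 := min_eq_right (by nlinarith)
    rw [hm]
    nlinarith [mul_nonneg (sub_nonneg.mpr h2) hs]
  · have hm : min (li ^ 2) (lj ^ 2) = li ^ 2 := min_eq_left (by nlinarith)
    rw [hm]
    nlinarith [mul_nonneg (sub_nonneg.mpr h1) (neg_nonneg.mpr hs)]
end

section
/- Let ε > 0 and let λ₁, …, λₙ be real numbers such that 3 + (1−ε)λᵢ² + 2λᵢλⱼ ≥ 0 for all indices i, j. Then for all indices i, j, k one has the strict inequalities 3 + λᵢλⱼ + λⱼλₖ + λₖλᵢ > 0 and 3 + λⱼ² + 2λᵢλⱼ > 0. -/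
lemma core_aux (a b c : ℝ) (hbc : 0 ≤ b*c) (hcb : c^2 ≤ b^2)
    (hab : -3 < a*b) (hb : 0 < 3 + b^2 + 2*a*b) :
    0 < 3 + a*b + b*c + c*a := by
  rcases eq_or_ne b 0 with hb0 | hb0
  · have hc0 : c = 0 := by nlinarith [sq_nonneg c]
    simp [hb0, hc0]
  · have hb2 : 0 < b^2 := by positivity
    have key : 0 < b^2 * (3 + a*b + b*c + c*a) := by
      have hid : b^2 * (3 + a*b + b*c + c*a)
          = (b^2 - b*c) * (3 + a*b) + (b*c) * (3 + b^2 + 2*a*b) := by ring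
      rw [hid]
      rcases lt_or_eq_of_le hbc with hpos | hzero
      · have t1 : 0 ≤ (b^2 - b*c) * (3 + a*b) := by
          apply mul_nonneg (by nlinarith [sq_nonneg (b-c), sq_nonneg (b+c)]) (by linarith)
        nlinarith [mul_pos hpos hb]
      · nlinarith [mul_pos hb2 (show (0:ℝ) < 3 + a*b by linarith)]
    by_contra hcon
    push_neg at hcon
    nlinarith [key]

-- pair lemma: product > -3, using both conditions
lemma pair_aux (ε x y : ℝ) (hε : 0 < ε)
    (hxy : 0 ≤ 3 + (1-ε)*x^2 + 2*x*y) (hyx : 0 ≤ 3 + (1-ε)*y^2 + 2*y*x) :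
    -3 < x*y := by
  rcases le_or_gt 0 (x*y) with hp | hn
  · linarith
  rcases le_or_gt ε 1 with he1 | he1
  · rcases le_or_gt (x^2) (y^2) with hs | hs
    · -- x is smaller: x^2 ≤ -x*y
      have hle : x^2 ≤ -(x*y) := by nlinarith [mul_nonneg (sq_nonneg x) (sub_nonneg.2 hs), sq_nonneg (x*y + x^2)]
      nlinarith [mul_le_mul_of_nonneg_left hle (by linarith : (0:ℝ) ≤ 1 - ε)]
    · have hle : y^2 ≤ -(y*x) := by nlinarith [mul_nonneg (sq_nonneg y) (sub_nonneg.2 hs.le), sq_nonneg (y*x + y^2)]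
      nlinarith [mul_le_mul_of_nonneg_left hle (by linarith : (0:ℝ) ≤ 1 - ε)]
  · nlinarith [sq_nonneg x]

/-- Strict positivity of all coefficients in the Simons-type formula under the
ε-convexity condition (used for inequality (2.10)). -/
theorem stmt_6 {n : ℕ} (ε : ℝ) (hε : 0 < ε) (lam : Fin n → ℝ)
    (h : ∀ i j : Fin n, 0 ≤ 3 + (1 - ε) * lam i ^ 2 + 2 * lam i * lam j) :
    ∀ i j k : Fin n,
      0 < 3 + lam i * lam j + lam j * lam k + lam k * lam i ∧
      0 < 3 + lam j ^ 2 + 2 * lam i * lam j := by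
  -- second part for all pairs
  have A : ∀ i j : Fin n, 0 < 3 + lam j ^ 2 + 2 * lam i * lam j := by
    intro i j
    have hji := h j i
    rcases eq_or_ne (lam j) 0 with h0 | h0
    · simp [h0]
    · have : 0 < ε * lam j ^ 2 := by positivity
      nlinarith
  have B : ∀ i j : Fin n, -3 < lam i * lam j :=
    fun i j => pair_aux ε (lam i) (lam j) hε (h i j) (h j i)
  intro i j k
  refine ⟨?_, A i j⟩
  set a := lam i; set b := lam j; set c := lam k
  -- find a pair with nonneg product
  rcases le_or_gt 0 (b*c) with hbc | hbc
  · rcases le_or_gt (c^2) (b^2) with hs | hs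
    · exact core_aux a b c hbc hs (B i j) (by nlinarith [A i j])
    · have := core_aux a c b (by linarith [mul_comm b c]) hs.le
        (by nlinarith [B i k]) (by nlinarith [A i k])
      nlinarith [this]
  rcases le_or_gt 0 (a*b) with hab | hab
  · rcases le_or_gt (b^2) (a^2) with hs | hs
    · have := core_aux c a b hab hs (by nlinarith [B i k]) (by nlinarith [A k i])
      nlinarith [this]
    · have := core_aux c b a (by nlinarith) hs.le (by nlinarith [B j k]) (by nlinarith [A k j])
      nlinarith [this]
  rcases le_or_gt 0 (a*c) with hac | hac
  · rcases le_or_gt (c^2) (a^2) with hs | hs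
    · have := core_aux b a c hac hs (by nlinarith [B i j]) (by nlinarith [A j i])
      nlinarith [this]
    · have := core_aux b c a (by nlinarith) hs.le (by nlinarith [B j k]) (by nlinarith [A j k])
      nlinarith [this]
  · exfalso
    nlinarith [sq_nonneg (a*b*c), mul_pos (mul_pos (neg_pos.2 hbc) (neg_pos.2 hab)) (neg_pos.2 hac)]
end
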